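/- For any discrete abelian group Γ, the convolution Banach algebra ℓ¹(Γ) is amenable. -/

import Mathlib

open scoped ComplexConjugate


open scoped ENNReal
set_option maxHeartbeats 1000000
set_option synthInstance.maxHeartbeats 400000
set_option linter.unusedSectionVars false

namespace L1Amen

variable {Γ : Type} [CommGroup Γ]

/-- average of translates of `φ` along a list. -/
noncomputable def avg (φ : Γ → ℝ) (L : List Γ) (x : Γ) : ℝ :=
  (L.map fun s => φ (s * x)).sum / L.length

/-- supremum of averages -/
noncomputable def Aav (φ : Γ → ℝ) (L : List Γ) : ℝ :=
  ⨆ x, avg φ L x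

lemma sum_map_le {α : Type*} (L : List α) (f : α → ℝ) {C : ℝ} (h : ∀ s ∈ L, f s ≤ C) :
    (L.map f).sum ≤ L.length * C := by
  calc (L.map f).sum ≤ (L.map fun _ => C).sum := List.sum_le_sum h
    _ = L.length * C := by
        simp [List.map_const', List.sum_replicate, nsmul_eq_mul]

lemma le_sum_map {α : Type*} (L : List α) (f : α → ℝ) {C : ℝ} (h : ∀ s ∈ L, C ≤ f s) :
    L.length * C ≤ (L.map f).sum := by
  have : (L.map fun _ => C).sum ≤ (L.map f).sum := List.sum_le_sum h
  calc (L.length : ℝ) * C = (L.map fun _ => C).sum := by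
        simp [List.map_const', List.sum_replicate, nsmul_eq_mul]
    _ ≤ (L.map f).sum := this

lemma avg_le {φ : Γ → ℝ} {C : ℝ} (hC : 0 ≤ C) (h : ∀ x, φ x ≤ C) (L : List Γ) (x : Γ) :
    avg φ L x ≤ C := by
  rcases Nat.eq_zero_or_pos L.length with h0 | h0
  · simp [avg, List.length_eq_zero_iff.mp h0, hC]
  · have hn : (0:ℝ) < L.length := by exact_mod_cast h0
    rw [avg, div_le_iff₀ hn]
    simpa [mul_comm] using sum_map_le L _ (fun s _ => h (s * x))

lemma le_avg {φ : Γ → ℝ} {C : ℝ} (hC : C ≤ 0) (h : ∀ x, C ≤ φ x) (L : List Γ) (x : Γ) :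
    C ≤ avg φ L x := by
  rcases Nat.eq_zero_or_pos L.length with h0 | h0
  · simp [avg, List.length_eq_zero_iff.mp h0, hC]
  · have hn : (0:ℝ) < L.length := by exact_mod_cast h0
    rw [avg, le_div_iff₀ hn]
    simpa [mul_comm] using le_sum_map L _ (fun s _ => h (s * x))

lemma bddAbove_avg {φ : Γ → ℝ} {C : ℝ} (hC : 0 ≤ C) (h : ∀ x, φ x ≤ C) (L : List Γ) :
    BddAbove (Set.range (avg φ L)) :=
  ⟨C, by rintro _ ⟨x, rfl⟩; exact avg_le hC h L x⟩

lemma Aav_le {φ : Γ → ℝ} {C : ℝ} (hC : 0 ≤ C) (h : ∀ x, φ x ≤ C) (L : List Γ) :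
    Aav φ L ≤ C :=
  ciSup_le (avg_le hC h L)

lemma avg_le_Aav {φ : Γ → ℝ} {C : ℝ} (hC : 0 ≤ C) (h : ∀ x, φ x ≤ C) (L : List Γ) (x : Γ) :
    avg φ L x ≤ Aav φ L :=
  le_ciSup (bddAbove_avg hC h L) x

lemma le_Aav {φ : Γ → ℝ} {C C' : ℝ} (hC : 0 ≤ C) (h : ∀ x, φ x ≤ C)
    (hC' : C' ≤ 0) (h' : ∀ x, C' ≤ φ x) (L : List Γ) : C' ≤ Aav φ L :=
  (le_avg hC' h' L 1).trans (avg_le_Aav hC h L 1)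

end L1Amen

namespace L1Amen

variable {Γ : Type} [CommGroup Γ]

lemma abs_apply_le (φ : lp (fun _ : Γ => ℝ) ∞) (x : Γ) : |(φ : Γ → ℝ) x| ≤ ‖φ‖ := by
  simpa [Real.norm_eq_abs] using lp.norm_apply_le_norm (ENNReal.top_ne_zero) φ x

/-- the sublinear functional: infimum of sup-averages over nonempty lists. -/
noncomputable def meanBound (φ : lp (fun _ : Γ => ℝ) ∞) : ℝ :=
  ⨅ L : {L : List Γ // L ≠ []}, Aav (⇑φ) L.1

instance : Nonempty {L : List Γ // L ≠ []} := ⟨⟨[1], by simp⟩⟩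

lemma apply_le_norm (φ : lp (fun _ : Γ => ℝ) ∞) : ∀ x, (φ : Γ → ℝ) x ≤ ‖φ‖ := fun x =>
  (le_abs_self _).trans (abs_apply_le φ x)

lemma neg_norm_le_apply (φ : lp (fun _ : Γ => ℝ) ∞) : ∀ x, -‖φ‖ ≤ (φ : Γ → ℝ) x := fun x =>
  (abs_le.mp (abs_apply_le φ x)).1

end L1Amen

namespace L1Amen

variable {Γ : Type} [CommGroup Γ]

lemma bddBelow_Aav (φ : lp (fun _ : Γ => ℝ) ∞) :
    BddBelow (Set.range fun L : {L : List Γ // L ≠ []} => Aav (⇑φ) L.1) := by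
  refine ⟨-‖φ‖, ?_⟩
  rintro _ ⟨L, rfl⟩
  exact le_Aav (norm_nonneg φ) (apply_le_norm φ) (neg_nonpos.mpr (norm_nonneg φ))
    (neg_norm_le_apply φ) L.1

lemma meanBound_le_Aav (φ : lp (fun _ : Γ => ℝ) ∞) (L : {L : List Γ // L ≠ []}) :
    meanBound φ ≤ Aav (⇑φ) L.1 :=
  ciInf_le (bddBelow_Aav φ) L

lemma neg_norm_le_meanBound (φ : lp (fun _ : Γ => ℝ) ∞) : -‖φ‖ ≤ meanBound φ :=
  le_ciInf fun L => le_Aav (norm_nonneg φ) (apply_le_norm φ)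
    (neg_nonpos.mpr (norm_nonneg φ)) (neg_norm_le_apply φ) L.1

lemma meanBound_le_norm (φ : lp (fun _ : Γ => ℝ) ∞) : meanBound φ ≤ ‖φ‖ :=
  (meanBound_le_Aav φ ⟨[1], by simp⟩).trans
    (Aav_le (norm_nonneg φ) (apply_le_norm φ) _)

/-- double list sums commute -/
lemma list_sum_comm {α β : Type*} (L : List α) (L' : List β) (f : α → β → ℝ) :
    (L.map fun s => (L'.map fun t => f s t).sum).sum
      = (L'.map fun t => (L.map fun s => f s t).sum).sum := by
  induction L with
  | nil => simp
  | cons a L ih =>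
      simp only [List.map_cons, List.sum_cons, ih]
      rw [← List.sum_map_add]

lemma sum_flatMap_map {α β : Type*} (L : List α) (g : α → List β) (f : β → ℝ) :
    ((L.flatMap g).map f).sum = (L.map fun s => ((g s).map f).sum).sum := by
  induction L with
  | nil => simp
  | cons a L ih => simp [List.flatMap_cons, ih]

end L1Amen

namespace L1Amen

variable {Γ : Type} [CommGroup Γ]

lemma length_prodList (L L' : List Γ) :
    (L.flatMap fun s => L'.map fun t => s * t).length = L.length * L'.length := by
  simp [List.length_flatMap, Function.comp_def, List.map_const', List.sum_replicate]

lemma prodList_ne_nil {L L' : List Γ} (hL : L ≠ []) (hL' : L' ≠ []) :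
    (L.flatMap fun s => L'.map fun t => s * t) ≠ [] := by
  intro h
  have := congrArg List.length h
  rw [length_prodList] at this
  simp only [List.length_nil, Nat.mul_eq_zero] at this
  rcases this with h1 | h1 <;>
    simp_all [List.length_eq_zero_iff]

lemma sum_prodList (φ : Γ → ℝ) (L L' : List Γ) (x : Γ) :
    ((L.flatMap fun s => L'.map fun t => s * t).map fun y => φ (y * x)).sum
      = (L.map fun s => (L'.map fun t => φ (s * t * x)).sum).sum := by
  rw [sum_flatMap_map]
  simp [List.map_map, Function.comp_def]

lemma avg_prodList_le_left {φ : Γ → ℝ} {C : ℝ} (hC : 0 ≤ C) (h : ∀ x, φ x ≤ C)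
    {L L' : List Γ} (hL : L ≠ []) (hL' : L' ≠ []) (x : Γ) :
    avg φ (L.flatMap fun s => L'.map fun t => s * t) x ≤ Aav φ L := by
  have hn : (0:ℝ) < L.length := by
    exact_mod_cast Nat.pos_of_ne_zero (fun hh => hL (List.length_eq_zero_iff.mp hh))
  have hm : (0:ℝ) < L'.length := by
    exact_mod_cast Nat.pos_of_ne_zero (fun hh => hL' (List.length_eq_zero_iff.mp hh))
  rw [avg, length_prodList, sum_prodList]
  rw [list_sum_comm]
  have inner : ∀ t : Γ, (L.map fun s => φ (s * t * x)).sum ≤ L.length * Aav φ L := by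
    intro t
    have : (L.map fun s => φ (s * (t * x))).sum ≤ L.length * Aav φ L := by
      have h1 : avg φ L (t * x) ≤ Aav φ L := avg_le_Aav hC h L (t * x)
      rw [avg, div_le_iff₀ hn] at h1
      calc (L.map fun s => φ (s * (t * x))).sum ≤ Aav φ L * L.length := h1
        _ = L.length * Aav φ L := mul_comm _ _
    simpa [mul_assoc] using this
  have houter : (L'.map fun t => (L.map fun s => φ (s * t * x)).sum).sum
      ≤ L'.length * (L.length * Aav φ L) :=
    sum_map_le _ _ (fun t _ => inner t)
  rw [Nat.cast_mul, div_le_iff₀ (by positivity)]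
  calc (L'.map fun t => (L.map fun s => φ (s * t * x)).sum).sum
      ≤ L'.length * (L.length * Aav φ L) := houter
    _ = Aav φ L * (L.length * L'.length) := by ring

lemma avg_prodList_le_right {ψ : Γ → ℝ} {C : ℝ} (hC : 0 ≤ C) (h : ∀ x, ψ x ≤ C)
    {L L' : List Γ} (hL : L ≠ []) (hL' : L' ≠ []) (x : Γ) :
    avg ψ (L.flatMap fun s => L'.map fun t => s * t) x ≤ Aav ψ L' := by
  have hn : (0:ℝ) < L.length := by
    exact_mod_cast Nat.pos_of_ne_zero (fun hh => hL (List.length_eq_zero_iff.mp hh))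
  have hm : (0:ℝ) < L'.length := by
    exact_mod_cast Nat.pos_of_ne_zero (fun hh => hL' (List.length_eq_zero_iff.mp hh))
  rw [avg, length_prodList, sum_prodList]
  have inner : ∀ s : Γ, (L'.map fun t => ψ (s * t * x)).sum ≤ L'.length * Aav ψ L' := by
    intro s
    have h1 : avg ψ L' (s * x) ≤ Aav ψ L' := avg_le_Aav hC h L' (s * x)
    rw [avg, div_le_iff₀ hm] at h1
    have : (L'.map fun t => ψ (t * (s * x))).sum ≤ L'.length * Aav ψ L' := by
      calc (L'.map fun t => ψ (t * (s * x))).sum ≤ Aav ψ L' * L'.length := h1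
        _ = L'.length * Aav ψ L' := mul_comm _ _
    have heq : ∀ s t : Γ, s * t * x = t * (s * x) := by
      intro s t; rw [mul_comm s t, mul_assoc]
    simpa [heq] using this
  have houter : (L.map fun s => (L'.map fun t => ψ (s * t * x)).sum).sum
      ≤ L.length * (L'.length * Aav ψ L') :=
    sum_map_le _ _ (fun s _ => inner s)
  rw [Nat.cast_mul, div_le_iff₀ (by positivity)]
  calc (L.map fun s => (L'.map fun t => ψ (s * t * x)).sum).sum
      ≤ L.length * (L'.length * Aav ψ L') := houter
    _ = Aav ψ L' * (L.length * L'.length) := by ring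

lemma meanBound_add (φ ψ : lp (fun _ : Γ => ℝ) ∞) :
    meanBound (φ + ψ) ≤ meanBound φ + meanBound ψ := by
  have key : ∀ (L L' : {L : List Γ // L ≠ []}),
      meanBound (φ + ψ) ≤ Aav (⇑φ) L.1 + Aav (⇑ψ) L'.1 := by
    intro L L'
    set P : List Γ := L.1.flatMap fun s => L'.1.map fun t => s * t with hPdef
    have hP : P ≠ [] := prodList_ne_nil L.2 L'.2
    refine (meanBound_le_Aav (φ + ψ) ⟨P, hP⟩).trans ?_
    refine ciSup_le fun x => ?_
    have hco : (⇑(φ + ψ) : Γ → ℝ) = ⇑φ + ⇑ψ := lp.coeFn_add φ ψ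
    have havg : avg (⇑(φ + ψ)) P x = avg (⇑φ) P x + avg (⇑ψ) P x := by
      rw [hco]
      simp only [avg, Pi.add_apply, ← add_div]
      rw [List.sum_map_add]
    rw [havg]
    exact add_le_add
      (avg_prodList_le_left (norm_nonneg φ) (apply_le_norm φ) L.2 L'.2 x)
      (avg_prodList_le_right (norm_nonneg ψ) (apply_le_norm ψ) L.2 L'.2 x)
  have step1 : ∀ L' : {L : List Γ // L ≠ []},
      meanBound (φ + ψ) - Aav (⇑ψ) L'.1 ≤ meanBound φ :=
    fun L' => le_ciInf fun L => sub_le_iff_le_add.mpr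
      ((key L L').trans_eq (by ring))
  have step2 : meanBound (φ + ψ) - meanBound φ ≤ meanBound ψ :=
    le_ciInf fun L' => sub_le_iff_le_add.mpr
      (sub_le_iff_le_add.mp (step1 L') |>.trans_eq (by ring))
  linarith

end L1Amen

namespace L1Amen

variable {Γ : Type} [CommGroup Γ]

lemma meanBound_smul {c : ℝ} (hc : 0 < c) (φ : lp (fun _ : Γ => ℝ) ∞) :
    meanBound (c • φ) = c * meanBound φ := by
  have hco : (⇑(c • φ) : Γ → ℝ) = c • ⇑φ := lp.coeFn_smul c φ
  have havg : ∀ L x, avg (⇑(c • φ)) L x = c * avg (⇑φ) L x := by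
    intro L x
    rw [hco]
    simp only [avg, Pi.smul_apply, smul_eq_mul]
    rw [List.sum_map_mul_left, mul_div_assoc]
  have hAav : ∀ L : List Γ, Aav (⇑(c • φ)) L = c * Aav (⇑φ) L := by
    intro L
    simp only [Aav, havg]
    exact (Real.mul_iSup_of_nonneg hc.le _).symm
  simp only [meanBound, hAav]
  exact (Real.mul_iInf_of_nonneg hc.le _).symm

lemma telescope_sum (f : ℕ → ℝ) (n : ℕ) :
    ((List.range n).map fun i => f (i + 1) - f i).sum = f n - f 0 := by
  induction n with
  | zero => simp
  | succ n ih => rw [List.range_succ]; simp [ih]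

/-- if `χ x = F (h * x) - F x` for a bounded `F`, then `meanBound χ ≤ 0`. -/
lemma meanBound_coboundary_le (χ : lp (fun _ : Γ => ℝ) ∞) (F : Γ → ℝ) {C : ℝ}
    (hC : 0 ≤ C) (hF : ∀ x, |F x| ≤ C) (h : Γ) (hχ : ∀ x, (χ : Γ → ℝ) x = F (h * x) - F x) :
    meanBound χ ≤ 0 := by
  have key : ∀ n : ℕ, 0 < n → meanBound χ ≤ 2 * C / n := by
    intro n hn
    have hLne : ((List.range n).map fun i => h ^ i) ≠ [] := by
      intro hcontra
      have := congrArg List.length hcontra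
      simp at this
      omega
    refine (meanBound_le_Aav χ ⟨_, hLne⟩).trans (ciSup_le fun x => ?_)
    have hlen : (((List.range n).map fun i => h ^ i)).length = n := by simp
    have hsum : ((((List.range n).map fun i => h ^ i)).map fun s => (χ : Γ → ℝ) (s * x)).sum
        = F (h ^ n * x) - F (1 * x) := by
      rw [List.map_map]
      have : ((List.range n).map fun i => (χ : Γ → ℝ) (h ^ i * x)).sum
          = ((List.range n).map fun i => F (h ^ (i + 1) * x) - F (h ^ i * x)).sum := by
        congr 1
        refine List.map_congr_left fun i _ => ?_
        rw [hχ, ← mul_assoc, ← pow_succ']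
      rw [Function.comp_def, this, telescope_sum (fun i => F (h ^ i * x)) n]
      simp
    rw [avg, hlen, hsum]
    have : F (h ^ n * x) - F (1 * x) ≤ 2 * C := by
      have h1 := (abs_le.mp (hF (h ^ n * x))).2
      have h2 := (abs_le.mp (hF (1 * x))).1
      linarith
    have hn' : (0:ℝ) < n := by exact_mod_cast hn
    gcongr
  -- conclude: meanBound χ ≤ 0 from ∀ n ≥ 1, ≤ 2C/n
  refine le_of_forall_pos_le_add fun ε hε => ?_
  obtain ⟨n, hn⟩ := exists_nat_gt (2 * C / ε)
  have hn0 : 0 < n := by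
    rcases Nat.eq_zero_or_pos n with rfl | hpos
    · exfalso
      have hnn : (0:ℝ) ≤ 2 * C / ε := div_nonneg (by linarith) hε.le
      simp only [Nat.cast_zero] at hn
      linarith
    · exact hpos
  refine (key n hn0).trans ?_
  rw [div_le_iff₀ (by exact_mod_cast hn0)]
  have : 2 * C / ε < n := hn
  rw [div_lt_iff₀ hε] at this
  nlinarith [hε.le, (by exact_mod_cast hn0 : (0:ℝ) < n)]

end L1Amen

namespace L1Amen

variable {Γ : Type} [CommGroup Γ]

theorem exists_real_invariant_mean :
    ∃ m : (lp (fun _ : Γ => ℝ) ∞) →ₗ[ℝ] ℝ,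
      (∀ φ, |m φ| ≤ ‖φ‖) ∧
      (∀ (φ ψ : lp (fun _ : Γ => ℝ) ∞) (h : Γ),
        (∀ x, (ψ : Γ → ℝ) x = (φ : Γ → ℝ) (h * x)) → m ψ = m φ) ∧
      (∀ (φ : lp (fun _ : Γ => ℝ) ∞) (c : ℝ), (∀ x, (φ : Γ → ℝ) x = c) → m φ = c) := by
  obtain ⟨g, -, hg⟩ := exists_extension_of_le_sublinear
    ((0 : (lp (fun _ : Γ => ℝ) ∞) →ₗ[ℝ] ℝ).toPMap ⊥) meanBound
    (fun c hc x => meanBound_smul hc x) (fun x y => meanBound_add x y)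
    (by
      rintro ⟨x, hx⟩
      simp only [LinearMap.toPMap_apply, LinearMap.zero_apply]
      have hx0 : x = 0 := by simpa using hx
      subst hx0
      have := neg_norm_le_meanBound (0 : lp (fun _ : Γ => ℝ) ∞)
      simpa using this)
  have hub : ∀ φ, |g φ| ≤ ‖φ‖ := by
    intro φ
    rw [abs_le]
    constructor
    · have h1 : g (-φ) ≤ ‖-φ‖ := (hg (-φ)).trans (meanBound_le_norm _)
      rw [map_neg, norm_neg] at h1
      linarith
    · exact (hg φ).trans (meanBound_le_norm φ)
  refine ⟨g, hub, ?_, ?_⟩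
  · intro φ ψ h hψ
    have h1 : g (ψ - φ) ≤ 0 := by
      refine (hg (ψ - φ)).trans (meanBound_coboundary_le (ψ - φ) (⇑φ) (norm_nonneg φ)
        (abs_apply_le φ) h fun x => ?_)
      rw [lp.coeFn_sub]
      simp [hψ x]
    have h2 : g (φ - ψ) ≤ 0 := by
      refine (hg (φ - ψ)).trans (meanBound_coboundary_le (φ - ψ) (-⇑φ) (norm_nonneg φ)
        (fun x => by simpa using abs_apply_le φ x) h fun x => ?_)
      rw [lp.coeFn_sub]
      simp only [Pi.sub_apply, Pi.neg_apply, hψ x]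
      ring
    rw [map_sub] at h1 h2
    linarith
  · intro φ c hc
    have hle : g φ ≤ c := by
      refine (hg φ).trans ((meanBound_le_Aav φ ⟨[1], by simp⟩).trans ?_)
      have : ∀ x, avg (⇑φ) [1] x = c := by
        intro x
        simp [avg, hc]
      refine le_of_eq ?_
      simp only [Aav, this]
      exact ciSup_const
    have hge : g (-φ) ≤ -c := by
      refine (hg (-φ)).trans ((meanBound_le_Aav (-φ) ⟨[1], by simp⟩).trans ?_)
      have : ∀ x, avg (⇑(-φ)) [1] x = -c := by
        intro x
        rw [lp.coeFn_neg]
        simp [avg, hc]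
      refine le_of_eq ?_
      simp only [Aav, this]
      exact ciSup_const
    rw [map_neg] at hge
    linarith

end L1Amen

namespace L1Amen

variable {Γ : Type} [CommGroup Γ]

theorem exists_complex_invariant_mean :
    ∃ M : (lp (fun _ : Γ => ℂ) ∞) →ₗ[ℂ] ℂ,
      (∀ φ, ‖M φ‖ ≤ 2 * ‖φ‖) ∧
      (∀ (φ ψ : lp (fun _ : Γ => ℂ) ∞) (h : Γ),
        (∀ x, (ψ : Γ → ℂ) x = (φ : Γ → ℂ) (h * x)) → M ψ = M φ) ∧
      (∀ (φ : lp (fun _ : Γ => ℂ) ∞) (c : ℂ), (∀ x, (φ : Γ → ℂ) x = c) → M φ = c) := by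
  obtain ⟨m, hub, hinv, hconst⟩ := exists_real_invariant_mean (Γ := Γ)
  have hmem : ∀ (f : Γ → ℝ) (C : ℝ), (∀ x, |f x| ≤ C) → Memℓp f ∞ := by
    intro f C hf
    exact memℓp_infty ⟨C, by rintro _ ⟨x, rfl⟩; simpa [Real.norm_eq_abs] using hf x⟩
  have happly : ∀ (φ : lp (fun _ : Γ => ℂ) ∞) (x : Γ), ‖(φ : Γ → ℂ) x‖ ≤ ‖φ‖ :=
    fun φ x => lp.norm_apply_le_norm ENNReal.top_ne_zero φ x
  set reP : (lp (fun _ : Γ => ℂ) ∞) → lp (fun _ : Γ => ℝ) ∞ := fun φ =>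
    ⟨fun x => ((φ : Γ → ℂ) x).re, hmem _ ‖φ‖ fun x =>
      (Complex.abs_re_le_norm _).trans (happly φ x)⟩
    with hreP
  set imP : (lp (fun _ : Γ => ℂ) ∞) → lp (fun _ : Γ => ℝ) ∞ := fun φ =>
    ⟨fun x => ((φ : Γ → ℂ) x).im, hmem _ ‖φ‖ fun x =>
      (Complex.abs_im_le_norm _).trans (happly φ x)⟩
    with himP
  have reP_apply : ∀ φ x, ((reP φ : Γ → ℝ)) x = ((φ : Γ → ℂ) x).re := fun φ x => rfl
  have imP_apply : ∀ φ x, ((imP φ : Γ → ℝ)) x = ((φ : Γ → ℂ) x).im := fun φ x => rfl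
  have norm_reP : ∀ φ, ‖reP φ‖ ≤ ‖φ‖ := by
    intro φ
    refine lp.norm_le_of_forall_le (norm_nonneg φ) fun x => ?_
    rw [reP_apply, Real.norm_eq_abs]
    exact (Complex.abs_re_le_norm _).trans (happly φ x)
  have norm_imP : ∀ φ, ‖imP φ‖ ≤ ‖φ‖ := by
    intro φ
    refine lp.norm_le_of_forall_le (norm_nonneg φ) fun x => ?_
    rw [imP_apply, Real.norm_eq_abs]
    exact (Complex.abs_im_le_norm _).trans (happly φ x)
  refine ⟨{ toFun := fun φ => (m (reP φ) : ℂ) + (m (imP φ) : ℂ) * Complex.I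
            map_add' := ?_
            map_smul' := ?_ }, ?_, ?_, ?_⟩
  · intro φ ψ
    have h1 : reP (φ + ψ) = reP φ + reP ψ := by
      apply lp.ext
      funext x
      simp only [reP_apply, lp.coeFn_add, Pi.add_apply]
      simp
    have h2 : imP (φ + ψ) = imP φ + imP ψ := by
      apply lp.ext
      funext x
      simp only [imP_apply, lp.coeFn_add, Pi.add_apply]
      simp
    rw [h1, h2, map_add, map_add]
    push_cast
    ring
  · intro c φ
    have h1 : reP (c • φ) = c.re • reP φ - c.im • imP φ := by
      apply lp.ext
      funext x
      simp only [reP_apply, imP_apply, lp.coeFn_sub, Pi.sub_apply, lp.coeFn_smul,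
        Pi.smul_apply, smul_eq_mul, Complex.real_smul]
      simp [Complex.mul_re]
    have h2 : imP (c • φ) = c.re • imP φ + c.im • reP φ := by
      apply lp.ext
      funext x
      simp only [imP_apply, reP_apply, lp.coeFn_add, Pi.add_apply, lp.coeFn_smul,
        Pi.smul_apply, smul_eq_mul, Complex.real_smul]
      simp [Complex.mul_im]
    rw [h1, h2, map_sub, map_add, map_smul, map_smul, map_smul, map_smul]
    simp only [smul_eq_mul, RingHom.id_apply]
    rw [Complex.ext_iff]
    constructor <;>
      simp [Complex.mul_re, Complex.mul_im, Complex.add_re, Complex.add_im] <;> ring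
  · intro φ
    simp only [LinearMap.coe_mk, AddHom.coe_mk]
    calc ‖(m (reP φ) : ℂ) + (m (imP φ) : ℂ) * Complex.I‖
        ≤ ‖(m (reP φ) : ℂ)‖ + ‖(m (imP φ) : ℂ) * Complex.I‖ := norm_add_le _ _
      _ ≤ ‖φ‖ + ‖φ‖ := by
          rw [norm_mul, Complex.norm_I, mul_one, Complex.norm_real, Complex.norm_real,
            Real.norm_eq_abs, Real.norm_eq_abs]
          exact add_le_add ((hub _).trans (norm_reP φ)) ((hub _).trans (norm_imP φ))
      _ = 2 * ‖φ‖ := by ring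
  · intro φ ψ h hψ
    simp only [LinearMap.coe_mk, AddHom.coe_mk]
    rw [hinv (reP φ) (reP ψ) h fun x => by rw [reP_apply, reP_apply, hψ x],
      hinv (imP φ) (imP ψ) h fun x => by rw [imP_apply, imP_apply, hψ x]]
  · intro φ c hc
    simp only [LinearMap.coe_mk, AddHom.coe_mk]
    rw [hconst (reP φ) c.re fun x => by rw [reP_apply, hc x],
      hconst (imP φ) c.im fun x => by rw [imP_apply, hc x]]
    simp [Complex.ext_iff]

end L1Amen


/-- A Banach `A`-bimodule: a Banach space with commuting bounded left and right actions of the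
Banach algebra `A`. -/
structure BanachBimodule (A : Type*) [NormedRing A] [NormedAlgebra ℂ A]
    (X : Type*) [NormedAddCommGroup X] [NormedSpace ℂ X] where
  smulL : A →L[ℂ] X →L[ℂ] X
  smulR : A →L[ℂ] X →L[ℂ] X
  mul_smulL : ∀ a b x, smulL (a * b) x = smulL a (smulL b x)
  mul_smulR : ∀ a b x, smulR (a * b) x = smulR b (smulR a x)
  smul_comm : ∀ a b x, smulL a (smulR b x) = smulR b (smulL a x)

/-- `D` is a bounded derivation from `A` into the dual bimodule `X*` of the Banach bimodule `X`
(the dual actions are `(a • f)(ξ) = f(ξ • a)` and `(f • a)(ξ) = f(a • ξ)`). -/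
def IsDualDerivation {A : Type*} [NormedRing A] [NormedAlgebra ℂ A]
    {X : Type*} [NormedAddCommGroup X] [NormedSpace ℂ X]
    (M : BanachBimodule A X) (D : A →L[ℂ] StrongDual ℂ X) : Prop :=
  ∀ a b ξ, D (a * b) ξ = D b (M.smulR a ξ) + D a (M.smulL b ξ)

/-- `D` is an inner derivation into the dual bimodule: `D a = a • f - f • a` for some `f ∈ X*`. -/
def IsInnerDual {A : Type*} [NormedRing A] [NormedAlgebra ℂ A]
    {X : Type*} [NormedAddCommGroup X] [NormedSpace ℂ X]
    (M : BanachBimodule A X) (D : A →L[ℂ] StrongDual ℂ X) : Prop :=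
  ∃ f : StrongDual ℂ X, ∀ a ξ, D a ξ = f (M.smulR a ξ) - f (M.smulL a ξ)

/-- A Banach algebra `A` is amenable if every bounded derivation from `A` into the dual of any
Banach `A`-bimodule is inner. -/
def Amenable (A : Type*) [NormedRing A] [NormedAlgebra ℂ A] : Prop :=
  ∀ (X : Type) (_ : NormedAddCommGroup X) (_ : NormedSpace ℂ X) (_ : CompleteSpace X)
    (M : BanachBimodule A X) (D : A →L[ℂ] StrongDual ℂ X),
    IsDualDerivation M D → IsInnerDual M D

/-- For any discrete abelian group `Γ`, the convolution Banach algebra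
`ℓ¹(Γ)` is amenable.  (We phrase this for any Banach algebra `A` isometrically isomorphic, as a
Banach space, to `ℓ¹(Γ)` in such a way that multiplication corresponds to convolution.) -/
theorem l1_of_discrete_abelian_group_amenable (Γ : Type) [CommGroup Γ]
    (A : Type) [NormedRing A] [NormedAlgebra ℂ A] [CompleteSpace A]
    (e : A ≃ₗᵢ[ℂ] lp (fun _ : Γ => ℂ) 1)
    (hconv : ∀ f g : A, ∀ γ : Γ, e (f * g) γ = ∑' δ : Γ, e f δ * e g (δ⁻¹ * γ)) :
    Amenable A := by
  classical
  intro X _ _ _ Mo D hD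
  obtain ⟨μ, hμb, hμinv, hμconst⟩ := L1Amen.exists_complex_invariant_mean (Γ := Γ)
  -- point masses
  set δe : Γ → A := fun γ => e.symm (lp.single 1 γ (1:ℂ)) with hδe
  have he : ∀ γ, e (δe γ) = lp.single 1 γ (1:ℂ) := fun γ => e.apply_symm_apply _
  have happ : ∀ γ γ', (e (δe γ) : Γ → ℂ) γ' = if γ' = γ then 1 else 0 := by
    intro γ γ'
    rw [he]
    by_cases h : γ' = γ
    · subst h; simp [lp.single_apply_self]
    · simp [lp.single_apply_ne _ _ _ h, h]
  have hnormδ : ∀ γ, ‖δe γ‖ = 1 := by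
    intro γ
    rw [hδe]
    simp only []
    rw [e.symm.norm_map]
    have := lp.norm_single (E := fun _ : Γ => ℂ) (p := 1) (by norm_num) γ (1:ℂ)
    simpa using this
  have hmulδ : ∀ γ η, δe γ * δe η = δe (γ * η) := by
    intro γ η
    apply e.injective
    apply lp.ext
    funext γ'
    have h1 : (e (δe γ * δe η) : Γ → ℂ) γ' = ∑' d : Γ, (e (δe γ) : Γ → ℂ) d * (e (δe η) : Γ → ℂ) (d⁻¹ * γ') :=
      hconv _ _ γ'
    rw [h1, tsum_eq_single γ (by
      intro d hd
      rw [happ]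
      simp [hd])]
    rw [happ, happ, happ]
    have hiff : (γ⁻¹ * γ' = η) ↔ (γ' = γ * η) := by
      constructor
      · intro hh; rw [← hh]; group
      · intro hh; rw [hh]; group
    simp [hiff]
  -- representation of a as sum
  haveI : Fact ((1:ℝ≥0∞) ≤ 1) := ⟨le_rfl⟩
  have hrep : ∀ a : A, HasSum (fun γ => (e a : Γ → ℂ) γ • δe γ) a := by
    intro a
    have h0 : HasSum (fun γ : Γ => lp.single 1 γ ((e a : Γ → ℂ) γ)) (e a) :=
      lp.hasSum_single ENNReal.one_ne_top (e a)
    have h1 := h0.mapL (e.symm.toContinuousLinearEquiv.toContinuousLinearMap)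
    have h2 : ∀ γ : Γ, e.symm.toContinuousLinearEquiv.toContinuousLinearMap
        (lp.single 1 γ ((e a : Γ → ℂ) γ)) = (e a : Γ → ℂ) γ • δe γ := by
      intro γ
      have : lp.single 1 γ ((e a : Γ → ℂ) γ)
          = (e a : Γ → ℂ) γ • lp.single (E := fun _ : Γ => ℂ) 1 γ (1:ℂ) := by
        rw [← lp.single_smul]
        congr 1
        simp
      rw [this]
      simp [hδe]
    rw [funext h2] at h1
    simpa using h1
  -- actions and cocycle
  set T : Γ → X →L[ℂ] X := fun γ => Mo.smulL (δe γ) with hT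
  set S : Γ → X →L[ℂ] X := fun γ => Mo.smulR (δe γ) with hS
  set u : Γ → StrongDual ℂ X := fun γ => D (δe γ) with hu
  have hTmul : ∀ γ η x, T γ (T η x) = T (γ * η) x := by
    intro γ η x
    rw [hT]
    simp only []
    rw [← hmulδ]
    exact (Mo.mul_smulL _ _ _).symm
  have hSmul : ∀ γ η x, S η (S γ x) = S (γ * η) x := by
    intro γ η x
    rw [hS]
    simp only []
    rw [← hmulδ]
    exact (Mo.mul_smulR _ _ _).symm
  have hTS : ∀ γ η x, T γ (S η x) = S η (T γ x) := fun γ η x => Mo.smul_comm _ _ _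
  have hcoc : ∀ g h ξ, u (g * h) ξ = u h (S g ξ) + u g (T h ξ) := by
    intro g h ξ
    rw [hu]
    simp only []
    rw [← hmulδ]
    exact hD _ _ ξ
  have hTnorm : ∀ γ x, ‖T γ x‖ ≤ ‖Mo.smulL‖ * ‖x‖ := by
    intro γ x
    calc ‖T γ x‖ ≤ ‖Mo.smulL (δe γ)‖ * ‖x‖ := (Mo.smulL (δe γ)).le_opNorm x
      _ ≤ (‖Mo.smulL‖ * ‖δe γ‖) * ‖x‖ := by
          gcongr
          exact Mo.smulL.le_opNorm _
      _ = ‖Mo.smulL‖ * ‖x‖ := by rw [hnormδ]; ring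
  have hunorm : ∀ γ x, ‖u γ x‖ ≤ ‖D‖ * ‖x‖ := by
    intro γ x
    calc ‖u γ x‖ ≤ ‖D (δe γ)‖ * ‖x‖ := (D (δe γ)).le_opNorm x
      _ ≤ (‖D‖ * ‖δe γ‖) * ‖x‖ := by gcongr; exact D.le_opNorm _
      _ = ‖D‖ * ‖x‖ := by rw [hnormδ]; ring
  -- bounded family used for the mean
  have hmemF : ∀ (w : Γ → ℂ) (C : ℝ), (∀ g, ‖w g‖ ≤ C) → Memℓp w ∞ := by
    intro w C hw
    exact memℓp_infty ⟨C, by rintro _ ⟨g, rfl⟩; exact hw g⟩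
  set C0 : ℝ := ‖D‖ * ‖Mo.smulL‖ with hC0
  have hFbound : ∀ (ξ : X) (g : Γ), ‖u g (T g⁻¹ ξ)‖ ≤ C0 * ‖ξ‖ := by
    intro ξ g
    calc ‖u g (T g⁻¹ ξ)‖ ≤ ‖D‖ * ‖T g⁻¹ ξ‖ := hunorm _ _
      _ ≤ ‖D‖ * (‖Mo.smulL‖ * ‖ξ‖) := by
          gcongr
          exact hTnorm _ _
      _ = C0 * ‖ξ‖ := by rw [hC0]; ring
  set FF : X → lp (fun _ : Γ => ℂ) ∞ := fun ξ =>
    ⟨fun g => u g (T g⁻¹ ξ), hmemF _ (C0 * ‖ξ‖) (hFbound ξ)⟩ with hFF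
  have hFFapp : ∀ ξ g, ((FF ξ : Γ → ℂ)) g = u g (T g⁻¹ ξ) := fun ξ g => rfl
  have hFFnorm : ∀ ξ, ‖FF ξ‖ ≤ C0 * ‖ξ‖ := by
    intro ξ
    have hC0n : (0:ℝ) ≤ C0 * ‖ξ‖ := by positivity
    exact lp.norm_le_of_forall_le hC0n fun g => hFbound ξ g
  -- the functional
  set f0 : X → ℂ := fun ξ => -(μ (FF ξ)) + u 1 (ξ - T 1 ξ) with hf0
  have hFFadd : ∀ ξ η, FF (ξ + η) = FF ξ + FF η := by
    intro ξ η
    apply lp.ext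
    funext g
    rw [lp.coeFn_add]
    simp only [Pi.add_apply, hFFapp]
    rw [map_add, map_add]
  have hFFsmul : ∀ (c : ℂ) ξ, FF (c • ξ) = c • FF ξ := by
    intro c ξ
    apply lp.ext
    funext g
    rw [lp.coeFn_smul]
    simp only [Pi.smul_apply, hFFapp]
    rw [map_smul, map_smul]
  set fl : X →ₗ[ℂ] ℂ :=
    { toFun := f0
      map_add' := by
        intro ξ η
        show f0 (ξ + η) = f0 ξ + f0 η
        rw [hf0]
        simp only []
        rw [hFFadd, map_add]
        simp only [map_sub, map_add]
        ring
      map_smul' := by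
        intro c ξ
        show f0 (c • ξ) = c • f0 ξ
        rw [hf0]
        simp only [smul_eq_mul]
        rw [hFFsmul, map_smul]
        simp only [map_sub, map_smul, smul_eq_mul]
        ring } with hfl
  have hf0bound : ∀ ξ, ‖f0 ξ‖ ≤ (2 * C0 + ‖D‖ * (1 + ‖Mo.smulL‖)) * ‖ξ‖ := by
    intro ξ
    rw [hf0]
    simp only []
    calc ‖-(μ (FF ξ)) + u 1 (ξ - T 1 ξ)‖ ≤ ‖μ (FF ξ)‖ + ‖u 1 (ξ - T 1 ξ)‖ := by
          simpa using norm_add_le (-(μ (FF ξ))) (u 1 (ξ - T 1 ξ))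
      _ ≤ 2 * (C0 * ‖ξ‖) + ‖D‖ * (‖ξ‖ + ‖Mo.smulL‖ * ‖ξ‖) := by
          refine add_le_add ((hμb _).trans (by gcongr; · linarith [hFFnorm ξ]; )) ?_
          refine (hunorm _ _).trans ?_
          gcongr
          calc ‖ξ - T 1 ξ‖ ≤ ‖ξ‖ + ‖T 1 ξ‖ := norm_sub_le _ _
            _ ≤ ‖ξ‖ + ‖Mo.smulL‖ * ‖ξ‖ := by gcongr; exact hTnorm _ _
      _ = (2 * C0 + ‖D‖ * (1 + ‖Mo.smulL‖)) * ‖ξ‖ := by ring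
  set f : X →L[ℂ] ℂ := LinearMap.mkContinuous fl (2 * C0 + ‖D‖ * (1 + ‖Mo.smulL‖)) hf0bound
    with hf
  have hfapp : ∀ ξ, f ξ = -(μ (FF ξ)) + u 1 (ξ - T 1 ξ) := fun ξ => rfl
  -- the key identity on point masses
  have key : ∀ (h : Γ) (ξ : X), u h ξ = f (S h ξ) - f (T h ξ) := by
    intro h ξ
    -- the translated family
    have hGbound : ∀ g : Γ, ‖u (h * g) (T g⁻¹ ξ)‖ ≤ C0 * ‖ξ‖ := by
      intro g
      calc ‖u (h * g) (T g⁻¹ ξ)‖ ≤ ‖D‖ * ‖T g⁻¹ ξ‖ := hunorm _ _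
        _ ≤ ‖D‖ * (‖Mo.smulL‖ * ‖ξ‖) := by gcongr; exact hTnorm _ _
        _ = C0 * ‖ξ‖ := by rw [hC0]; ring
    set G : lp (fun _ : Γ => ℂ) ∞ := ⟨fun g => u (h * g) (T g⁻¹ ξ), hmemF _ _ hGbound⟩ with hG
    have hGapp : ∀ g, ((G : Γ → ℂ)) g = u (h * g) (T g⁻¹ ξ) := fun g => rfl
    -- invariance: μ G = μ (FF (T h ξ))
    have hTh : ∀ g : Γ, ((FF (T h ξ) : Γ → ℂ)) g = u g (T (g⁻¹ * h) ξ) := by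
      intro g
      rw [hFFapp, hTmul]
    have hinvG : μ G = μ (FF (T h ξ)) := by
      refine hμinv (FF (T h ξ)) G h fun x => ?_
      rw [hGapp, hTh]
      congr 2
      group
    -- constant
    have hcstmem : Memℓp (fun _ : Γ => (u h (T 1 ξ) : ℂ)) ∞ :=
      hmemF _ ‖u h (T 1 ξ)‖ fun _ => le_rfl
    set Cst : lp (fun _ : Γ => ℂ) ∞ := ⟨fun _ => u h (T 1 ξ), hcstmem⟩ with hCst
    have hCstapp : ∀ g, ((Cst : Γ → ℂ)) g = u h (T 1 ξ) := fun g => rfl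
    have hμCst : μ Cst = u h (T 1 ξ) := hμconst Cst _ hCstapp
    -- FF (S h ξ) = G - Cst
    have hSh : FF (S h ξ) = G - Cst := by
      apply lp.ext
      funext g
      rw [lp.coeFn_sub]
      simp only [Pi.sub_apply, hFFapp, hGapp, hCstapp]
      have h1 : T g⁻¹ (S h ξ) = S h (T g⁻¹ ξ) := hTS _ _ _
      have h2 : u (h * g) (T g⁻¹ ξ) = u g (S h (T g⁻¹ ξ)) + u h (T g (T g⁻¹ ξ)) := hcoc h g _
      have h3 : T g (T g⁻¹ ξ) = T 1 ξ := by rw [hTmul]; congr 1; group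
      rw [h1]
      rw [h3] at h2
      linear_combination (-1 : ℂ) * h2
    have hμSh : μ (FF (S h ξ)) = μ (FF (T h ξ)) - u h (T 1 ξ) := by
      rw [hSh, map_sub, hμCst, hinvG]
    -- now compute f (S h ξ) - f (T h ξ)
    rw [hfapp, hfapp, hμSh]
    have hTzero : T h ξ - T 1 (T h ξ) = 0 := by
      rw [hTmul, one_mul, sub_self]
    have hu1S : u 1 (S h ξ - T 1 (S h ξ)) = u h ξ - u h (T 1 ξ) := by
      have hql : S h ξ - T 1 (S h ξ) = S h (ξ - T 1 ξ) := by
        rw [map_sub, hTS]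
      rw [hql]
      have h4 : u (h * 1) (ξ - T 1 ξ) = u 1 (S h (ξ - T 1 ξ)) + u h (T 1 (ξ - T 1 ξ)) :=
        hcoc h 1 _
      have h5 : T 1 (ξ - T 1 ξ) = 0 := by
        rw [map_sub, hTmul, one_mul, sub_self]
      rw [h5, map_zero, add_zero, mul_one] at h4
      rw [← h4, map_sub]
    rw [hTzero, map_zero, hu1S]
    ring
  -- conclude for general a
  refine ⟨f, ?_⟩
  intro a ξ
  set Φ1 : A →L[ℂ] ℂ := D.flip ξ with hΦ1
  set Φ2 : A →L[ℂ] ℂ := f.comp (Mo.smulR.flip ξ) - f.comp (Mo.smulL.flip ξ) with hΦ2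
  have hΦ1app : ∀ b : A, Φ1 b = D b ξ := fun b => rfl
  have hΦ2app : ∀ b : A, Φ2 b = f (Mo.smulR b ξ) - f (Mo.smulL b ξ) := fun b => rfl
  have hδagree : ∀ γ : Γ, Φ1 (δe γ) = Φ2 (δe γ) := by
    intro γ
    rw [hΦ1app, hΦ2app]
    exact key γ ξ
  have h1 := (hrep a).mapL Φ1
  have h2 := (hrep a).mapL Φ2
  have hsame : (fun γ : Γ => Φ1 ((e a : Γ → ℂ) γ • δe γ))
      = fun γ : Γ => Φ2 ((e a : Γ → ℂ) γ • δe γ) := by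
    funext γ
    rw [map_smul, map_smul, hδagree]
  rw [hsame] at h1
  have : Φ1 a = Φ2 a := h1.unique h2
  rw [hΦ1app, hΦ2app] at this
  exact this
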